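/- Let V ⊆ ℝ² be open and let φ : V → ℝ be smooth, nowhere vanishing, of constant sign ε ∈ {1, −1} (i.e. ε·φ > 0 on V), and with Δφ > 0 on V. Set ψ := Δφ/|φ| = ε·Δφ/φ, which is smooth and positive on V. Then φ satisfies the equation Δφ/φ − (φ_x² + φ_y²)/(2φ²) − (1/2)·Δ(log Δφ) = 0 on V if and only if ψ satisfies Δ(log ψ) = ε·ψ on V; moreover the identity Δφ = ε·ψ·φ holds on V by construction. -/

import Mathlib

/-- First partial derivative in the `x` direction of a function on `ℝ²`. -/
noncomputable def px (f : ℝ × ℝ → ℝ) (p : ℝ × ℝ) : ℝ := fderiv ℝ f p (1, 0)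

/-- First partial derivative in the `y` direction of a function on `ℝ²`. -/
noncomputable def py (f : ℝ × ℝ → ℝ) (p : ℝ × ℝ) : ℝ := fderiv ℝ f p (0, 1)

/-- The Laplacian `Δf = f_xx + f_yy` of a function on `ℝ²`. -/
noncomputable def lap (f : ℝ × ℝ → ℝ) (p : ℝ × ℝ) : ℝ := px (px f) p + py (py f) p

open Real Filter

private lemma diffAt' {V : Set (ℝ × ℝ)} (hV : IsOpen V) {f : ℝ × ℝ → ℝ}
    (hf : ContDiffOn ℝ (⊤ : ℕ∞) f V) {p : ℝ × ℝ} (hp : p ∈ V) : DifferentiableAt ℝ f p :=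
  ((hf.differentiableOn (by simp)) p hp).differentiableAt (hV.mem_nhds hp)

private lemma contDiffOn_pd {V : Set (ℝ × ℝ)} (hV : IsOpen V) {f : ℝ × ℝ → ℝ}
    (hf : ContDiffOn ℝ (⊤ : ℕ∞) f V) (v : ℝ × ℝ) :
    ContDiffOn ℝ (⊤ : ℕ∞) (fun p => fderiv ℝ f p v) V :=
  (hf.fderiv_of_isOpen hV (by exact_mod_cast le_top)).clm_apply contDiffOn_const

private lemma contDiffOn_px {V : Set (ℝ × ℝ)} (hV : IsOpen V) {f : ℝ × ℝ → ℝ}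
    (hf : ContDiffOn ℝ (⊤ : ℕ∞) f V) : ContDiffOn ℝ (⊤ : ℕ∞) (px f) V :=
  contDiffOn_pd hV hf (1, 0)

private lemma contDiffOn_py {V : Set (ℝ × ℝ)} (hV : IsOpen V) {f : ℝ × ℝ → ℝ}
    (hf : ContDiffOn ℝ (⊤ : ℕ∞) f V) : ContDiffOn ℝ (⊤ : ℕ∞) (py f) V :=
  contDiffOn_pd hV hf (0, 1)

private lemma contDiffOn_lap {V : Set (ℝ × ℝ)} (hV : IsOpen V) {f : ℝ × ℝ → ℝ}
    (hf : ContDiffOn ℝ (⊤ : ℕ∞) f V) : ContDiffOn ℝ (⊤ : ℕ∞) (lap f) V :=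
  (contDiffOn_px hV (contDiffOn_px hV hf)).add (contDiffOn_py hV (contDiffOn_py hV hf))

private lemma pd_log {f : ℝ × ℝ → ℝ} {p : ℝ × ℝ} (v : ℝ × ℝ) (hf : DifferentiableAt ℝ f p)
    (h0 : f p ≠ 0) :
    fderiv ℝ (fun q => Real.log (f q)) p v = fderiv ℝ f p v / f p := by
  rw [(hf.hasFDerivAt.log h0).fderiv]
  simp [div_eq_inv_mul]

private lemma pd_div {g h : ℝ × ℝ → ℝ} {p : ℝ × ℝ} (v : ℝ × ℝ) (hg : DifferentiableAt ℝ g p)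
    (hh : DifferentiableAt ℝ h p) (h0 : h p ≠ 0) :
    fderiv ℝ (fun q => g q / h q) p v =
      (fderiv ℝ g p v * h p - g p * fderiv ℝ h p v) / h p ^ 2 := by
  have h1 : HasFDerivAt (fun q => (h q)⁻¹) ((-(h p ^ 2)⁻¹) • fderiv ℝ h p) p := by
    exact (hasDerivAt_inv h0).comp_hasFDerivAt p hh.hasFDerivAt
  have h2 := hg.hasFDerivAt.mul h1
  have h3 : (fun q => g q / h q) = fun q => g q * (h q)⁻¹ := by
    funext q; rw [div_eq_mul_inv]
  rw [h3, show (fun q => g q * (h q)⁻¹) = g * fun q => (h q)⁻¹ from rfl, h2.fderiv]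
  simp only [ContinuousLinearMap.add_apply, ContinuousLinearMap.smul_apply, smul_eq_mul]
  field_simp
  ring

private lemma lap_congr {f g : ℝ × ℝ → ℝ} {p : ℝ × ℝ} (h : f =ᶠ[nhds p] g) :
    lap f p = lap g p := by
  have hx : px f =ᶠ[nhds p] px g := (h.fderiv (𝕜 := ℝ)).mono fun q hq => by simp only [px, hq]
  have hy : py f =ᶠ[nhds p] py g := (h.fderiv (𝕜 := ℝ)).mono fun q hq => by simp only [py, hq]
  simp only [lap, px, py, hx.fderiv_eq, hy.fderiv_eq]

private lemma lap_sub {V : Set (ℝ × ℝ)} (hV : IsOpen V) {f g : ℝ × ℝ → ℝ}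
    (hf : ContDiffOn ℝ (⊤ : ℕ∞) f V) (hg : ContDiffOn ℝ (⊤ : ℕ∞) g V) {p : ℝ × ℝ}
    (hp : p ∈ V) : lap (fun q => f q - g q) p = lap f p - lap g p := by
  have hx : ∀ q ∈ V, px (fun r => f r - g r) q = px f q - px g q := by
    intro q hq
    simp only [px]
    rw [fderiv_fun_sub (diffAt' hV hf hq) (diffAt' hV hg hq)]
    rfl
  have hy : ∀ q ∈ V, py (fun r => f r - g r) q = py f q - py g q := by
    intro q hq
    simp only [py]
    rw [fderiv_fun_sub (diffAt' hV hf hq) (diffAt' hV hg hq)]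
    rfl
  have ex : px (px (fun r => f r - g r)) p = px (px f) p - px (px g) p := by
    have heq : px (fun r => f r - g r) =ᶠ[nhds p] fun q => px f q - px g q :=
      Filter.eventuallyEq_of_mem (hV.mem_nhds hp) hx
    have e2 := fderiv_fun_sub (𝕜 := ℝ) (diffAt' hV (contDiffOn_px hV hf) hp)
      (diffAt' hV (contDiffOn_px hV hg) hp)
    show fderiv ℝ (px fun r => f r - g r) p (1, 0) = _
    rw [heq.fderiv_eq, e2]
    rfl
  have ey : py (py (fun r => f r - g r)) p = py (py f) p - py (py g) p := by
    have heq : py (fun r => f r - g r) =ᶠ[nhds p] fun q => py f q - py g q :=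
      Filter.eventuallyEq_of_mem (hV.mem_nhds hp) hy
    have e2 := fderiv_fun_sub (𝕜 := ℝ) (diffAt' hV (contDiffOn_py hV hf) hp)
      (diffAt' hV (contDiffOn_py hV hg) hp)
    show fderiv ℝ (py fun r => f r - g r) p (0, 1) = _
    rw [heq.fderiv_eq, e2]
    rfl
  simp only [lap]
  rw [ex, ey]
  ring

private lemma lap_log_eq {V : Set (ℝ × ℝ)} (hV : IsOpen V) {f : ℝ × ℝ → ℝ}
    (hf : ContDiffOn ℝ (⊤ : ℕ∞) f V) (hne : ∀ q ∈ V, f q ≠ 0) {p : ℝ × ℝ} (hp : p ∈ V) :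
    lap (fun q => Real.log (f q)) p =
      lap f p / f p - (px f p ^ 2 + py f p ^ 2) / f p ^ 2 := by
  have hx : ∀ q ∈ V, px (fun r => Real.log (f r)) q = px f q / f q := fun q hq => by
    simpa [px] using pd_log (1, 0) (diffAt' hV hf hq) (hne q hq)
  have hy : ∀ q ∈ V, py (fun r => Real.log (f r)) q = py f q / f q := fun q hq => by
    simpa [py] using pd_log (0, 1) (diffAt' hV hf hq) (hne q hq)
  have ex : px (px (fun r => Real.log (f r))) p
      = (px (px f) p * f p - px f p * px f p) / f p ^ 2 := by
    have heq : px (fun r => Real.log (f r)) =ᶠ[nhds p] fun q => px f q / f q :=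
      Filter.eventuallyEq_of_mem (hV.mem_nhds hp) hx
    have e2 := pd_div (g := px f) (h := f) (p := p) (1, 0)
      (diffAt' hV (contDiffOn_px hV hf) hp) (diffAt' hV hf hp) (hne p hp)
    show fderiv ℝ (px fun r => Real.log (f r)) p (1, 0) = _
    rw [heq.fderiv_eq, e2]
    rfl
  have ey : py (py (fun r => Real.log (f r))) p
      = (py (py f) p * f p - py f p * py f p) / f p ^ 2 := by
    have heq : py (fun r => Real.log (f r)) =ᶠ[nhds p] fun q => py f q / f q :=
      Filter.eventuallyEq_of_mem (hV.mem_nhds hp) hy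
    have e2 := pd_div (g := py f) (h := f) (p := p) (0, 1)
      (diffAt' hV (contDiffOn_py hV hf) hp) (diffAt' hV hf hp) (hne p hp)
    show fderiv ℝ (py fun r => Real.log (f r)) p (0, 1) = _
    rw [heq.fderiv_eq, e2]
    rfl
  have h0 := hne p hp
  simp only [lap]
  rw [ex, ey]
  field_simp
  ring

/-- for a smooth nowhere vanishing `φ` of constant sign `ε` with `Δφ > 0`,
setting `ψ := ε·Δφ/φ` (smooth and positive), equation (con111***) on `φ` is equivalent to the
Liouville-type equation `Δ(log ψ) = ε·ψ`, and `Δφ = ε·ψ·φ` holds. -/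
theorem stmt_6 (V : Set (ℝ × ℝ)) (hV : IsOpen V)
    (φ : ℝ × ℝ → ℝ) (ε : ℝ) (hε : ε = 1 ∨ ε = -1)
    (hφ : ContDiffOn ℝ (⊤ : ℕ∞) φ V)
    (hφsign : ∀ p ∈ V, 0 < ε * φ p) (hΔφ : ∀ p ∈ V, 0 < lap φ p)
    (ψ : ℝ × ℝ → ℝ) (hψ : ψ = fun p => ε * lap φ p / φ p) :
    ContDiffOn ℝ (⊤ : ℕ∞) ψ V ∧ (∀ p ∈ V, 0 < ψ p) ∧
    ((∀ p ∈ V,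
        lap φ p / φ p - (px φ p ^ 2 + py φ p ^ 2) / (2 * φ p ^ 2)
          - (1 / 2) * lap (fun q => Real.log (lap φ q)) p = 0)
      ↔ (∀ p ∈ V, lap (fun q => Real.log (ψ q)) p = ε * ψ p)) ∧
    (∀ p ∈ V, lap φ p = ε * ψ p * φ p) := by
  have hεne : ε ≠ 0 := by rcases hε with h | h <;> rw [h] <;> norm_num
  have hε2 : ε * ε = 1 := by rcases hε with h | h <;> rw [h] <;> norm_num
  have hφne : ∀ p ∈ V, φ p ≠ 0 := by
    intro p hp h
    have := hφsign p hp
    rw [h, mul_zero] at this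
    exact lt_irrefl 0 this
  have hlapC : ContDiffOn ℝ (⊤ : ℕ∞) (lap φ) V := contDiffOn_lap hV hφ
  have hlapne : ∀ p ∈ V, lap φ p ≠ 0 := fun p hp => ne_of_gt (hΔφ p hp)
  have hψC : ContDiffOn ℝ (⊤ : ℕ∞) ψ V := by
    rw [hψ]; exact (contDiffOn_const.mul hlapC).div hφ hφne
  have hψpos : ∀ p ∈ V, 0 < ψ p := by
    intro p hp
    rw [hψ]
    show 0 < ε * lap φ p / φ p
    have h1 : 0 < ε * φ p := hφsign p hp
    have h2 : 0 < lap φ p := hΔφ p hp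
    have h3 : φ p ≠ 0 := hφne p hp
    have h4 : (0:ℝ) < φ p ^ 2 := by positivity
    have h5 : ε * lap φ p / φ p = lap φ p * (ε * φ p) / φ p ^ 2 := by
      field_simp
    rw [h5]
    exact div_pos (mul_pos h2 h1) h4
  refine ⟨hψC, hψpos, ?_, ?_⟩
  · -- the equivalence
    have key1 : ∀ p ∈ V, lap (fun q => Real.log (φ q)) p =
        lap φ p / φ p - (px φ p ^ 2 + py φ p ^ 2) / φ p ^ 2 := fun p hp =>
      lap_log_eq hV hφ hφne hp
    have keyψ : ∀ p ∈ V, lap (fun q => Real.log (ψ q)) p =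
        lap (fun q => Real.log (lap φ q)) p - lap (fun q => Real.log (φ q)) p := by
      intro p hp
      have hEq : ∀ q ∈ V, Real.log (ψ q) = Real.log (lap φ q) - Real.log (φ q) := by
        intro q hq
        rw [hψ]
        simp only
        rw [div_eq_mul_inv, Real.log_mul (mul_ne_zero hεne (hlapne q hq))
          (inv_ne_zero (hφne q hq)), Real.log_inv, Real.log_mul hεne (hlapne q hq)]
        have hlogε : Real.log ε = 0 := by
          rcases hε with h | h <;> rw [h] <;> simp
        rw [hlogε]
        ring
      have h1 : (fun q => Real.log (ψ q)) =ᶠ[nhds p]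
          fun q => Real.log (lap φ q) - Real.log (φ q) :=
        Filter.eventuallyEq_of_mem (hV.mem_nhds hp) hEq
      rw [lap_congr h1, lap_sub hV (hlapC.log hlapne) (hφ.log hφne) hp]
    constructor
    · intro H p hp
      have k1 := key1 p hp
      have kψ := keyψ p hp
      have h := H p hp
      have h3 : φ p ≠ 0 := hφne p hp
      have hψp : ψ p = ε * lap φ p / φ p := by rw [hψ]
      rw [kψ, k1, hψp]
      rcases hε with rfl | rfl
      · linear_combination (-2 : ℝ) * h
      · linear_combination (-2 : ℝ) * h
    · intro H p hp
      have k1 := key1 p hp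
      have kψ := keyψ p hp
      have h := H p hp
      have h3 : φ p ≠ 0 := hφne p hp
      have hψp : ψ p = ε * lap φ p / φ p := by rw [hψ]
      rw [kψ, k1, hψp] at h
      rcases hε with rfl | rfl
      · linear_combination (-1/2 : ℝ) * h
      · linear_combination (-1/2 : ℝ) * h
  · intro p hp
    have h3 : φ p ≠ 0 := hφne p hp
    have hψp : ψ p = ε * lap φ p / φ p := by rw [hψ]
    rw [hψp]
    rcases hε with rfl | rfl <;> field_simp
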